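/- Let p be a prime and P_1, ..., P_d ∈ M_n(ℤ_p) be pairwise commuting matrices with P_i² ≡ P_i (mod p) for each i, P_i P_j ≡ 0 (mod p) for i ≠ j, and P_1 + ... + P_d ≡ I (mod p), where I is the identity matrix. Then the limits P̃_i = lim_j P_i^{p^j} exist and satisfy P̃_1 + ... + P̃_d = I, P̃_i² = P̃_i, and P̃_i P̃_j = 0 for i ≠ j. In particular ℤ_p^n decomposes as the direct sum of the images of the P̃_i. -/

import Mathlib

/-!
For commuting `x, y` in any ring, `c ∣ x - y` implies `c ^ (k + 1) ∣ x ^ c ^ k - y ^ c ^ k`: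
`x ^ c - y ^ c` factors as `(x - y) * ∑ x ^ i * y ^ (c - 1 - i)` and the sum is
`≡ c * y ^ (c - 1) ≡ 0 (mod c)`. Applied to `P ^ 2 ≡ P`, `P ^ p ≡ P` and `P_i * P_j ≡ 0`, this
makes `P ^ p ^ j` a Cauchy sequence whose limit is an idempotent `≡ P (mod p)`, and makes the
limits of different `P_i` orthogonal. Then `1 - ∑ P̃_i` is an idempotent divisible by `p`, hence
by every power of `p`, hence zero.
-/

open Filter Topology

section NatCastDvd

variable {A : Type*} [Ring A] {c : ℕ}

theorem natCast_pow_add_dvd_mul {a b : ℕ} {x y : A} (hx : (c : A) ^ a ∣ x)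
    (hy : (c : A) ^ b ∣ y) : (c : A) ^ (a + b) ∣ x * y := by
  obtain ⟨x', rfl⟩ := hx
  obtain ⟨y', rfl⟩ := hy
  refine ⟨x' * y', ?_⟩
  rw [pow_add, mul_assoc, ← mul_assoc x', ← ((Nat.cast_commute c x').pow_left b).eq, mul_assoc,
    mul_assoc]

theorem natCast_dvd_mul_left {x : A} (hx : (c : A) ∣ x) (y : A) : (c : A) ∣ y * x := by
  obtain ⟨x', rfl⟩ := hx
  exact ⟨y * x', by rw [← mul_assoc, ← (Nat.cast_commute c y).eq, mul_assoc]⟩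

theorem natCast_dvd_pow_sub_pow {x y : A} (h : (c : A) ∣ x - y) (k : ℕ) :
    (c : A) ∣ x ^ k - y ^ k := by
  induction k with
  | zero => simp
  | succ k ih =>
    have : x ^ (k + 1) - y ^ (k + 1) = x ^ k * (x - y) + (x ^ k - y ^ k) * y := by
      simp only [pow_succ]; noncomm_ring
    rw [this]
    exact dvd_add (natCast_dvd_mul_left h _) (ih.mul_right y)

theorem natCast_dvd_geom_sum₂ {x y : A} (h : (c : A) ∣ x - y) :
    (c : A) ∣ ∑ i ∈ Finset.range c, x ^ i * y ^ (c - 1 - i) := by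
  have hsplit : ∑ i ∈ Finset.range c, x ^ i * y ^ (c - 1 - i) =
      ∑ i ∈ Finset.range c, (x ^ i - y ^ i) * y ^ (c - 1 - i) + c * y ^ (c - 1) := by
    have hy : ∀ i ∈ Finset.range c, y ^ i * y ^ (c - 1 - i) = y ^ (c - 1) := fun i hi => by
      rw [← pow_add, Nat.add_sub_cancel' (by simp at hi; omega)]
    simp only [sub_mul, Finset.sum_sub_distrib, Finset.sum_congr rfl hy, Finset.sum_const,
      Finset.card_range, nsmul_eq_mul, sub_add_cancel]
  rw [hsplit]
  exact dvd_add (Finset.dvd_sum fun i _ => (natCast_dvd_pow_sub_pow h i).mul_right _)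
    (dvd_mul_right _ _)

theorem Commute.natCast_pow_dvd_pow_pow_sub {x y : A} (hxy : Commute x y) (h : (c : A) ∣ x - y)
    (k : ℕ) : (c : A) ^ (k + 1) ∣ x ^ c ^ k - y ^ c ^ k := by
  induction k with
  | zero => simpa using h
  | succ k ih =>
    have hc : (c : A) ∣ x ^ c ^ k - y ^ c ^ k := (dvd_pow_self _ k.succ_ne_zero).trans ih
    rw [pow_succ c k, pow_mul, pow_mul, ← (hxy.pow_pow _ _).geom_sum₂_mul, add_comm]
    exact natCast_pow_add_dvd_mul (by simpa using natCast_dvd_geom_sum₂ hc) ih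

theorem natCast_pow_dvd_pow_pow (hc : c ≠ 0) {x : A} (h : (c : A) ∣ x) (k : ℕ) :
    (c : A) ^ (k + 1) ∣ x ^ c ^ k := by
  have := (Commute.zero_right x).natCast_pow_dvd_pow_pow_sub (by rwa [sub_zero]) k
  rwa [zero_pow (pow_ne_zero k hc), sub_zero] at this

theorem natCast_dvd_pow_sub_self {x : A} (h : (c : A) ∣ x * x - x) {k : ℕ} (hk : k ≠ 0) :
    (c : A) ∣ x ^ k - x := by
  obtain ⟨k, rfl⟩ := Nat.exists_eq_succ_of_ne_zero hk
  clear hk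
  induction k with
  | zero => simp
  | succ k ih =>
    have : x ^ (k + 2) - x = (x ^ (k + 1) - x) * x + (x * x - x) := by
      rw [pow_succ x (k + 1)]; noncomm_ring
    rw [this]
    exact dvd_add (ih.mul_right x) h

theorem natCast_pow_dvd_pow_pow_mul_self_sub {x : A} (h : (c : A) ∣ x * x - x) (k : ℕ) :
    (c : A) ^ (k + 1) ∣ x ^ c ^ k * x ^ c ^ k - x ^ c ^ k := by
  simpa [(Commute.refl x).mul_pow] using
    ((Commute.refl x).mul_left (Commute.refl x)).natCast_pow_dvd_pow_pow_sub h k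

theorem natCast_pow_dvd_pow_pow_succ_sub (hc : c ≠ 0) {x : A} (h : (c : A) ∣ x * x - x)
    (k : ℕ) : (c : A) ^ (k + 1) ∣ x ^ c ^ (k + 1) - x ^ c ^ k := by
  simpa [← pow_mul, ← pow_succ'] using
    ((Commute.refl x).pow_left c).natCast_pow_dvd_pow_pow_sub (natCast_dvd_pow_sub_self h hc) k

end NatCastDvd

theorem CompleteOrthogonalIdempotents.isInternal_range {R M I : Type*} [Ring R] [AddCommGroup M]
    [Module R M] [Fintype I] [DecidableEq I] {e : I → Module.End R M}
    (he : CompleteOrthogonalIdempotents e) :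
    DirectSum.IsInternal fun i => LinearMap.range (e i) := by
  refine DirectSum.isInternal_submodule_of_iSupIndep_of_iSup_eq_top (fun i => ?_) ?_
  · rw [Submodule.disjoint_def]
    rintro x ⟨y, rfl⟩ hy
    have hker : (⨆ j, ⨆ (_ : j ≠ i), LinearMap.range (e j)) ≤ LinearMap.ker (e i) :=
      iSup₂_le fun j hj => LinearMap.range_le_ker_iff.mpr (he.ortho (Ne.symm hj))
    rw [← (he.idem i).eq, Module.End.mul_apply]
    exact LinearMap.mem_ker.mp (hker hy)
  · refine eq_top_iff.mpr fun x _ => ?_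
    rw [← LinearMap.id_apply (R := R) x, ← Module.End.one_eq_id, ← he.complete,
      LinearMap.sum_apply]
    exact Submodule.sum_mem _ fun i _ => Submodule.mem_iSup_of_mem i (LinearMap.mem_range_self _ x)

section Matrix

variable {ι R : Type*} [Fintype ι] [DecidableEq ι]

theorem Matrix.scalar_dvd_iff [CommSemiring R] {c : R} {A : Matrix ι ι R} :
    Matrix.scalar ι c ∣ A ↔ ∀ i j, c ∣ A i j := by
  constructor
  · rintro ⟨B, rfl⟩ i j
    simp
  · intro h
    choose B hB using h
    exact ⟨Matrix.of B, by ext i j; simp [hB]⟩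

theorem Matrix.natCast_pow_dvd_iff [CommSemiring R] {k m : ℕ} {A : Matrix ι ι R} :
    (k : Matrix ι ι R) ^ m ∣ A ↔ ∀ i j, (k : R) ^ m ∣ A i j := by
  rw [← Matrix.scalar_dvd_iff, map_pow, map_natCast]

end Matrix

section PadicMatrix

variable {p : ℕ} [Fact p.Prime] {ι : Type*} [Fintype ι] [DecidableEq ι]

-- The entrywise sup norm; its topology is the product topology on matrices.
attribute [local instance] Matrix.normedAddCommGroup

theorem Matrix.norm_le_iff_natCast_pow_dvd {m : ℕ} {A : Matrix ι ι ℤ_[p]} :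
    ‖A‖ ≤ (p : ℝ)⁻¹ ^ m ↔ (p : Matrix ι ι ℤ_[p]) ^ m ∣ A := by
  rw [show (p : ℝ)⁻¹ ^ m = (p : ℝ) ^ (-m : ℤ) by rw [_root_.zpow_neg, zpow_natCast, inv_pow]]
  simp_rw [Matrix.norm_le_iff (zpow_nonneg (Nat.cast_nonneg p) _),
    PadicInt.norm_le_pow_iff_mem_span_pow, Ideal.mem_span_singleton, Matrix.natCast_pow_dvd_iff]

theorem Matrix.exists_tendsto_of_natCast_pow_dvd_sub {Q : ℕ → Matrix ι ι ℤ_[p]}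
    (h : ∀ j, (p : Matrix ι ι ℤ_[p]) ^ (j + 1) ∣ Q (j + 1) - Q j) :
    ∃ L, Tendsto Q atTop (𝓝 L) := by
  refine cauchySeq_tendsto_of_complete (cauchySeq_of_le_geometric (p : ℝ)⁻¹ (p : ℝ)⁻¹ ?_ ?_)
  · exact inv_lt_one_of_one_lt₀ (mod_cast (Fact.out : p.Prime).one_lt)
  · intro j
    rw [dist_comm, dist_eq_norm, ← pow_succ']
    exact Matrix.norm_le_iff_natCast_pow_dvd.mpr (h j)

theorem Matrix.tendsto_zero_of_natCast_pow_dvd {E : ℕ → Matrix ι ι ℤ_[p]}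
    (h : ∀ j, (p : Matrix ι ι ℤ_[p]) ^ (j + 1) ∣ E j) : Tendsto E atTop (𝓝 0) := by
  refine squeeze_zero_norm (fun j => Matrix.norm_le_iff_natCast_pow_dvd.mpr (h j)) ?_
  refine (tendsto_pow_atTop_nhds_zero_of_lt_one (by positivity) ?_).comp (tendsto_add_atTop_nat 1)
  exact inv_lt_one_of_one_lt₀ (mod_cast (Fact.out : p.Prime).one_lt)

theorem Matrix.natCast_pow_dvd_of_tendsto {m : ℕ} {Q : ℕ → Matrix ι ι ℤ_[p]}
    {L : Matrix ι ι ℤ_[p]} (hQ : Tendsto Q atTop (𝓝 L))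
    (h : ∀ j, (p : Matrix ι ι ℤ_[p]) ^ m ∣ Q j) : (p : Matrix ι ι ℤ_[p]) ^ m ∣ L := by
  simp_rw [← Matrix.norm_le_iff_natCast_pow_dvd, ← mem_closedBall_zero_iff] at h ⊢
  exact Metric.isClosed_closedBall.mem_of_tendsto hQ (Eventually.of_forall h)

theorem Matrix.exists_tendsto_pow_prime_pow {P : Matrix ι ι ℤ_[p]}
    (hP : (p : Matrix ι ι ℤ_[p]) ∣ P * P - P) :
    ∃ L, Tendsto (fun j => P ^ p ^ j) atTop (𝓝 L) ∧ IsIdempotentElem L ∧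
      (p : Matrix ι ι ℤ_[p]) ∣ L - P := by
  have hp : p ≠ 0 := (Fact.out : p.Prime).ne_zero
  obtain ⟨L, hL⟩ :=
    Matrix.exists_tendsto_of_natCast_pow_dvd_sub (natCast_pow_dvd_pow_pow_succ_sub hp hP)
  refine ⟨L, hL, ?_, ?_⟩
  · exact sub_eq_zero.mp <| tendsto_nhds_unique ((hL.mul hL).sub hL)
      (Matrix.tendsto_zero_of_natCast_pow_dvd (natCast_pow_dvd_pow_pow_mul_self_sub hP))
  · simpa using Matrix.natCast_pow_dvd_of_tendsto (m := 1) (hL.sub_const P)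
      fun j => by simpa using natCast_dvd_pow_sub_self hP (pow_ne_zero j hp)

theorem Matrix.mul_eq_zero_of_tendsto_pow_prime_pow {P Q L L' : Matrix ι ι ℤ_[p]}
    (hPQ : Commute P Q) (h : (p : Matrix ι ι ℤ_[p]) ∣ P * Q)
    (hL : Tendsto (fun j => P ^ p ^ j) atTop (𝓝 L))
    (hL' : Tendsto (fun j => Q ^ p ^ j) atTop (𝓝 L')) : L * L' = 0 := by
  have hp : p ≠ 0 := (Fact.out : p.Prime).ne_zero
  refine tendsto_nhds_unique (hL.mul hL') (Matrix.tendsto_zero_of_natCast_pow_dvd fun j => ?_)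
  rw [← hPQ.mul_pow]
  exact natCast_pow_dvd_pow_pow hp h j

theorem IsIdempotentElem.eq_zero_of_natCast_dvd {e : Matrix ι ι ℤ_[p]} (he : IsIdempotentElem e)
    (h : (p : Matrix ι ι ℤ_[p]) ∣ e) : e = 0 := by
  have hp : p ≠ 0 := (Fact.out : p.Prime).ne_zero
  refine tendsto_nhds_unique tendsto_const_nhds (Matrix.tendsto_zero_of_natCast_pow_dvd fun j => ?_)
  rw [← he.pow_eq (pow_ne_zero j hp)]
  exact natCast_pow_dvd_pow_pow hp h j

theorem OrthogonalIdempotents.complete_of_natCast_dvd {I : Type*} [Fintype I]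
    {e : I → Matrix ι ι ℤ_[p]} (he : OrthogonalIdempotents e)
    (h : (p : Matrix ι ι ℤ_[p]) ∣ ∑ i, e i - 1) : CompleteOrthogonalIdempotents e := by
  refine ⟨he, (sub_eq_zero.mp ?_).symm⟩
  exact he.isIdempotentElem_sum.one_sub.eq_zero_of_natCast_dvd (by simpa using h.neg_right)

end PadicMatrix

/-- a complete family of approximate orthogonal idempotents mod `p` in
`M_n(ℤ_p)` limits to a genuine complete family of orthogonal idempotents, giving a direct
sum decomposition of `ℤ_p^n`. -/
theorem stmt_11 (p : ℕ) [Fact p.Prime] (n d : ℕ)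
    (P : Fin d → Matrix (Fin n) (Fin n) ℤ_[p])
    (hcomm : ∀ i j, P i * P j = P j * P i)
    (hidem : ∀ i, ∀ r s, (p : ℤ_[p]) ∣ (P i * P i - P i) r s)
    (horth : ∀ i j, i ≠ j → ∀ r s, (p : ℤ_[p]) ∣ (P i * P j) r s)
    (hsum : ∀ r s, (p : ℤ_[p]) ∣ ((∑ i, P i) - 1) r s) :
    ∃ Pt : Fin d → Matrix (Fin n) (Fin n) ℤ_[p],
      (∀ i, Filter.Tendsto (fun j : ℕ => P i ^ p ^ j) Filter.atTop (nhds (Pt i))) ∧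
      (∑ i, Pt i) = 1 ∧
      (∀ i, Pt i * Pt i = Pt i) ∧
      (∀ i j, i ≠ j → Pt i * Pt j = 0) ∧
      DirectSum.IsInternal fun i : Fin d => LinearMap.range (Matrix.toLin' (Pt i)) := by
  have hdvd {A : Matrix (Fin n) (Fin n) ℤ_[p]} (h : ∀ r s, (p : ℤ_[p]) ∣ A r s) :
      (p : Matrix (Fin n) (Fin n) ℤ_[p]) ∣ A := by
    simpa using (Matrix.natCast_pow_dvd_iff (m := 1)).mpr (by simpa using h)
  choose Pt hPt hPt_idem hPt_congr using
    fun i => Matrix.exists_tendsto_pow_prime_pow (hdvd (hidem i))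
  have hortho : OrthogonalIdempotents Pt := ⟨hPt_idem, fun i j hij =>
    Matrix.mul_eq_zero_of_tendsto_pow_prime_pow (hcomm i j) (hdvd (horth i j hij)) (hPt i) (hPt j)⟩
  have hcongr_sum : (p : Matrix (Fin n) (Fin n) ℤ_[p]) ∣ ∑ i, Pt i - 1 := by
    rw [show ∑ i, Pt i - 1 = ∑ i, (Pt i - P i) + (∑ i, P i - 1) by
      rw [Finset.sum_sub_distrib]; abel]
    exact dvd_add (Finset.dvd_sum fun i _ => hPt_congr i) (hdvd hsum)
  have hcomplete := hortho.complete_of_natCast_dvd hcongr_sum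
  exact ⟨Pt, hPt, hcomplete.complete, fun i => (hPt_idem i).eq, fun i j hij => hortho.ortho hij,
    (hcomplete.map Matrix.toLinAlgEquiv'.toRingHom).isInternal_range⟩
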